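/- arXiv:2008.10760 — 2 statements merged into one kernel-verified Lean document; each statement's English description precedes it below -/
import Mathlib

section
/- Let F and G be the empirical distribution functions of two finite real samples of sizes m and m'. If sup_{t∈ℝ} |∫_{−∞}^t (F(x) − G(x)) dx| = 0 and all sample points of both samples are distinct within each sample, then the two empirical measures are equal. -/
open MeasureTheory
open scoped ENNReal

/-- Let F and G be the empirical distribution functions of two finite real samples of sizes
m and m', with all sample points distinct within each sample.  If
`sup_t |∫_{−∞}^t (F − G)| = 0`, then the two empirical probability measures
`(1/m) Σ δ_{y_i}` and `(1/m') Σ δ_{z_j}` are equal. -/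
theorem stmt12 {m m' : ℕ} (hm : 0 < m) (hm' : 0 < m')
    (y : Fin m → ℝ) (z : Fin m' → ℝ)
    (hy : Function.Injective y) (hz : Function.Injective z)
    (h : (⨆ t : ℝ, |∫ x in Set.Iio t,
        (((Finset.univ.filter (fun i => y i ≤ x)).card : ℝ) / (m : ℝ) -
          ((Finset.univ.filter (fun j => z j ≤ x)).card : ℝ) / (m' : ℝ))|) = 0) :
    ((m : ℝ≥0∞))⁻¹ • (∑ i : Fin m, Measure.dirac (y i)) =
      ((m' : ℝ≥0∞))⁻¹ • (∑ j : Fin m', Measure.dirac (z j)) := by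
  classical
  set f : ℝ → ℝ := fun x =>
      (((Finset.univ.filter (fun i => y i ≤ x)).card : ℝ) / (m : ℝ) -
        ((Finset.univ.filter (fun j => z j ≤ x)).card : ℝ) / (m' : ℝ)) with hf
  -- the finite set of all sample points
  set S : Finset ℝ := (Finset.univ.image y) ∪ (Finset.univ.image z) with hS
  have hSne : S.Nonempty := by
    refine Finset.Nonempty.inl ⟨y ⟨0, hm⟩, Finset.mem_image_of_mem _ (Finset.mem_univ _)⟩
  set c : ℝ := S.min' hSne with hc
  set M : ℝ := S.max' hSne with hM
  have hyS : ∀ i, y i ∈ S := fun i => Finset.mem_union_left _ (Finset.mem_image_of_mem _ (Finset.mem_univ _))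
  have hzS : ∀ j, z j ∈ S := fun j => Finset.mem_union_right _ (Finset.mem_image_of_mem _ (Finset.mem_univ _))
  -- measurability
  have hcard_y : ∀ x : ℝ, ((Finset.univ.filter (fun i => y i ≤ x)).card : ℝ) =
      ∑ i : Fin m, Set.indicator (Set.Ici (y i)) (fun _ => (1:ℝ)) x := by
    intro x
    rw [Finset.card_filter]
    push_cast
    refine Finset.sum_congr rfl fun i _ => ?_
    by_cases hix : y i ≤ x
    · simp [Set.indicator_of_mem, Set.mem_Ici.2 hix, hix]
    · simp [Set.indicator_of_notMem, fun hh => hix (Set.mem_Ici.1 hh), hix]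
  have hcard_z : ∀ x : ℝ, ((Finset.univ.filter (fun j => z j ≤ x)).card : ℝ) =
      ∑ j : Fin m', Set.indicator (Set.Ici (z j)) (fun _ => (1:ℝ)) x := by
    intro x
    rw [Finset.card_filter]
    push_cast
    refine Finset.sum_congr rfl fun j _ => ?_
    by_cases hjx : z j ≤ x
    · simp [Set.indicator_of_mem, Set.mem_Ici.2 hjx, hjx]
    · simp [Set.indicator_of_notMem, fun hh => hjx (Set.mem_Ici.1 hh), hjx]
  have hmeas : Measurable f := by
    have h1 : Measurable fun x : ℝ => ((Finset.univ.filter (fun i => y i ≤ x)).card : ℝ) := by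
      simp only [hcard_y]
      exact Finset.measurable_sum _ fun i _ =>
        (measurable_const.indicator measurableSet_Ici)
    have h2 : Measurable fun x : ℝ => ((Finset.univ.filter (fun j => z j ≤ x)).card : ℝ) := by
      simp only [hcard_z]
      exact Finset.measurable_sum _ fun j _ =>
        (measurable_const.indicator measurableSet_Ici)
    exact (h1.div_const _).sub (h2.div_const _)
  -- bound
  have hbound : ∀ x, |f x| ≤ 2 := by
    intro x
    have h1 : (0:ℝ) ≤ ((Finset.univ.filter (fun i => y i ≤ x)).card : ℝ) / m := by positivity
    have h2 : ((Finset.univ.filter (fun i => y i ≤ x)).card : ℝ) / m ≤ 1 := by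
      rw [div_le_one (by exact_mod_cast hm)]
      exact_mod_cast (Finset.card_filter_le _ _).trans (le_of_eq (Finset.card_fin m))
    have h3 : (0:ℝ) ≤ ((Finset.univ.filter (fun j => z j ≤ x)).card : ℝ) / m' := by positivity
    have h4 : ((Finset.univ.filter (fun j => z j ≤ x)).card : ℝ) / m' ≤ 1 := by
      rw [div_le_one (by exact_mod_cast hm')]
      exact_mod_cast (Finset.card_filter_le _ _).trans (le_of_eq (Finset.card_fin m'))
    rw [abs_le]
    constructor <;> simp only [hf] <;> nlinarith
  -- support
  have hsupp : ∀ x, x ∉ Set.Icc c M → f x = 0 := by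
    intro x hx
    simp only [Set.mem_Icc, not_and_or, not_le] at hx
    rcases hx with hx | hx
    · have hy0 : (Finset.univ.filter (fun i => y i ≤ x)) = ∅ := by
        refine Finset.filter_eq_empty_iff.2 fun i _ => ?_
        exact not_le.2 (lt_of_lt_of_le hx (S.min'_le _ (hyS i)))
      have hz0 : (Finset.univ.filter (fun j => z j ≤ x)) = ∅ := by
        refine Finset.filter_eq_empty_iff.2 fun j _ => ?_
        exact not_le.2 (lt_of_lt_of_le hx (S.min'_le _ (hzS j)))
      simp [hf, hy0, hz0]
    · have hy1 : (Finset.univ.filter (fun i => y i ≤ x)) = Finset.univ := by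
        refine Finset.filter_eq_self.2 fun i _ => ?_
        exact le_of_lt (lt_of_le_of_lt (S.le_max' _ (hyS i)) hx)
      have hz1 : (Finset.univ.filter (fun j => z j ≤ x)) = Finset.univ := by
        refine Finset.filter_eq_self.2 fun j _ => ?_
        exact le_of_lt (lt_of_le_of_lt (S.le_max' _ (hzS j)) hx)
      have hmne : (m:ℝ) ≠ 0 := by exact_mod_cast hm.ne'
      have hmne' : (m':ℝ) ≠ 0 := by exact_mod_cast hm'.ne'
      simp [hf, hy1, hz1, Finset.card_univ, div_self, hmne, hmne']
  have hfeq : f = (Set.Icc c M).indicator f := by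
    funext x
    by_cases hx : x ∈ Set.Icc c M
    · rw [Set.indicator_of_mem hx]
    · rw [Set.indicator_of_notMem hx, hsupp x hx]
  -- global integrability
  have hint : Integrable f (volume) := by
    rw [hfeq]
    rw [integrable_indicator_iff measurableSet_Icc]
    refine Measure.integrableOn_of_bounded (M := 2) ?_ hmeas.aestronglyMeasurable ?_
    · simp [Real.volume_Icc]
    · exact Filter.Eventually.of_forall fun x => by
        simpa [Real.norm_eq_abs] using hbound x
  have hintOn : ∀ s : Set ℝ, IntegrableOn f s := fun s => hint.integrableOn
  -- all partial integrals vanish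
  have hH : ∀ t : ℝ, ∫ x in Set.Iio t, f x = 0 := by
    intro t
    have hBdd : BddAbove (Set.range fun t : ℝ => |∫ x in Set.Iio t, f x|) := by
      refine ⟨∫ x, |f x|, ?_⟩
      rintro _ ⟨t, rfl⟩
      calc |∫ x in Set.Iio t, f x| ≤ ∫ x in Set.Iio t, |f x| := by
            simpa [Real.norm_eq_abs] using
              norm_integral_le_integral_norm (μ := volume.restrict (Set.Iio t)) f
        _ ≤ ∫ x, |f x| :=
            setIntegral_le_integral hint.abs
              (Filter.Eventually.of_forall fun x => abs_nonneg _)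
    have hle : |∫ x in Set.Iio t, f x| ≤ 0 := h ▸ le_ciSup hBdd t
    have := abs_nonneg (∫ x in Set.Iio t, f x)
    exact abs_eq_zero.1 (le_antisymm hle this)
  -- pointwise vanishing of f
  have hf0 : ∀ x, f x = 0 := by
    intro x
    -- choose ε so that no sample point is in (x, x+ε)
    obtain ⟨ε, hε, hconst⟩ : ∃ ε > 0, ∀ u ∈ Set.Ico x (x + ε), f u = f x := by
      set T : Finset ℝ := S.filter (fun s => x < s) with hT
      by_cases hTe : T.Nonempty
      · refine ⟨T.min' hTe - x, ?_, ?_⟩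
        · have := (Finset.mem_filter.1 (T.min'_mem hTe)).2
          linarith
        · intro u hu
          obtain ⟨hu1, hu2⟩ := hu
          have key : ∀ s ∈ S, (s ≤ u ↔ s ≤ x) := by
            intro s hsS
            constructor
            · intro hsu
              by_contra hsx
              have hsT : s ∈ T := Finset.mem_filter.2 ⟨hsS, not_le.1 hsx⟩
              have := T.min'_le _ hsT
              linarith
            · intro hsx; linarith
          simp only [hf]
          congr 2
          · congr 1; exact congrArg Finset.card (Finset.filter_congr fun i _ => by
              simpa using (key (y i) (hyS i)))
          · congr 1; exact congrArg Finset.card (Finset.filter_congr fun j _ => by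
              simpa using (key (z j) (hzS j)))
      · refine ⟨1, one_pos, ?_⟩
        intro u hu
        obtain ⟨hu1, hu2⟩ := hu
        have key : ∀ s ∈ S, (s ≤ u ↔ s ≤ x) := by
          intro s hsS
          have : ¬ x < s := fun hlt => hTe ⟨s, Finset.mem_filter.2 ⟨hsS, hlt⟩⟩
          constructor
          · intro _; exact not_lt.1 this
          · intro hsx; linarith
        simp only [hf]
        congr 2
        · congr 1; exact congrArg Finset.card (Finset.filter_congr fun i _ => by
            simpa using (key (y i) (hyS i)))
        · congr 1; exact congrArg Finset.card (Finset.filter_congr fun j _ => by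
            simpa using (key (z j) (hzS j)))
    have hunion : Set.Iio x ∪ Set.Ico x (x + ε) = Set.Iio (x + ε) :=
      Set.Iio_union_Ico_eq_Iio (by linarith)
    have hdisj : Disjoint (Set.Iio x) (Set.Ico x (x + ε)) := by
      rw [Set.disjoint_left]
      rintro u hu ⟨hu1, _⟩
      exact absurd hu1 (not_le.2 hu)
    have hsum : (∫ u in Set.Iio x, f u) + ∫ u in Set.Ico x (x + ε), f u
        = ∫ u in Set.Iio (x + ε), f u := by
      rw [← hunion]
      exact (setIntegral_union hdisj measurableSet_Ico (hintOn _) (hintOn _)).symm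
    rw [hH x, hH (x + ε), zero_add] at hsum
    have hconst' : ∫ u in Set.Ico x (x + ε), f u = ε * f x := by
      rw [setIntegral_congr_fun measurableSet_Ico (fun u hu => hconst u hu)]
      rw [setIntegral_const]
      simp [Real.volume_Ico, ENNReal.toReal_ofReal hε.le, hε.le]
    rw [hconst'] at hsum
    have := mul_eq_zero.1 hsum
    rcases this with h1 | h1
    · exact absurd h1 hε.ne'
    · exact h1
  -- translate into nat equality of counts
  have hcount : ∀ a : ℝ, ((Finset.univ.filter (fun i => y i ≤ a)).card : ℝ) * m'
      = ((Finset.univ.filter (fun j => z j ≤ a)).card : ℝ) * m := by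
    intro a
    have := hf0 a
    have hmne : (m:ℝ) ≠ 0 := by exact_mod_cast hm.ne'
    have hmne' : (m':ℝ) ≠ 0 := by exact_mod_cast hm'.ne'
    simp only [hf, sub_eq_zero] at this
    rw [div_eq_div_iff hmne hmne'] at this
    linarith [this]
  -- finish by comparing on Iic
  have hfin : IsFiniteMeasure (((m : ℝ≥0∞))⁻¹ • (∑ i : Fin m, Measure.dirac (y i))) := by
    constructor
    simp only [Measure.smul_apply, Measure.coe_finset_sum, Finset.sum_apply, smul_eq_mul]
    refine ENNReal.mul_lt_top (ENNReal.inv_lt_top.2 (by exact_mod_cast hm)) ?_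
    simp [measure_univ]
  refine @Measure.ext_of_Iic ℝ _ _ _ _ _ _ _ _ hfin fun a => ?_
  have hyval : (∑ i : Fin m, Measure.dirac (y i)) (Set.Iic a)
      = ((Finset.univ.filter (fun i => y i ≤ a)).card : ℝ≥0∞) := by
    rw [Measure.coe_finset_sum, Finset.sum_apply]
    rw [Finset.card_filter]
    push_cast
    refine Finset.sum_congr rfl fun i _ => ?_
    rw [Measure.dirac_apply' _ measurableSet_Iic]
    by_cases hia : y i ≤ a
    · simp [Set.indicator_of_mem, Set.mem_Iic.2 hia, hia]
    · simp [Set.indicator_of_notMem, fun hh => hia (Set.mem_Iic.1 hh), hia]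
  have hzval : (∑ j : Fin m', Measure.dirac (z j)) (Set.Iic a)
      = ((Finset.univ.filter (fun j => z j ≤ a)).card : ℝ≥0∞) := by
    rw [Measure.coe_finset_sum, Finset.sum_apply]
    rw [Finset.card_filter]
    push_cast
    refine Finset.sum_congr rfl fun j _ => ?_
    rw [Measure.dirac_apply' _ measurableSet_Iic]
    by_cases hja : z j ≤ a
    · simp [Set.indicator_of_mem, Set.mem_Iic.2 hja, hja]
    · simp [Set.indicator_of_notMem, fun hh => hja (Set.mem_Iic.1 hh), hja]
  simp only [Measure.smul_apply, smul_eq_mul, hyval, hzval]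
  -- nat-level count equality
  have hnat : (Finset.univ.filter (fun i => y i ≤ a)).card * m'
      = (Finset.univ.filter (fun j => z j ≤ a)).card * m := by
    exact_mod_cast hcount a
  rw [← ENNReal.div_eq_inv_mul, ← ENNReal.div_eq_inv_mul]
  rw [ENNReal.div_eq_div_iff (by exact_mod_cast hm'.ne') (by simp)
    (by exact_mod_cast hm.ne') (by simp)]
  have hnat2 : m' * (Finset.univ.filter (fun i => y i ≤ a)).card
      = m * (Finset.univ.filter (fun j => z j ≤ a)).card := by
    rw [Nat.mul_comm, hnat, Nat.mul_comm]
  exact_mod_cast hnat2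
end

section
/- Let ε ∈ (0,1) and consider the stationary chain generated by (τ₁, p₁). The stationary distribution of the order-2 Markov chain (X_{n-1}, X_n) restricted to admissible pairs assigns to the symbol marginal: P(X_n = 2) = 1/3, P(X_n = 1) = 2(1−ε)/3, P(X_n = 0) = 2ε/3. -/
/-!
At time `n` exactly one phase `k₀` puts the pattern on a `2`, so `X n = 2` is the event
`phase = k₀`, of probability `1/3`, while `X n = 0` (resp. `1`) forces `phase ≠ k₀` and a
flip (resp. no flip) at `n`, an event of probability at most `2ε/3` (resp. `2(1-ε)/3`).
These three bounds add up to `1` and the three events cover the sample space, so all of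
them are equalities.
-/

open MeasureTheory Finset
open scoped ENNReal

/-- No measurability is needed: the complement of `A i` is covered by the other `A j`,
so subadditivity turns the upper bounds into lower bounds. -/
theorem MeasureTheory.measure_eq_of_iUnion_eq_univ_of_le {Ω ι : Type*} [MeasurableSpace Ω]
    [Fintype ι] [DecidableEq ι] {μ : Measure Ω} [IsProbabilityMeasure μ] {A : ι → Set Ω}
    {c : ι → ℝ≥0∞} (hA : ⋃ i, A i = Set.univ) (hle : ∀ i, μ (A i) ≤ c i) (hc : ∑ i, c i = 1)
    (i : ι) : μ (A i) = c i := by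
  refine le_antisymm (hle i) ?_
  have hrest : ∑ j ∈ univ.erase i, c j ≠ ∞ :=
    ne_top_of_le_ne_top (hc ▸ ENNReal.one_ne_top) (sum_le_sum_of_subset (subset_univ _))
  have hcover : ∑ j, c j ≤ μ (A i) + ∑ j ∈ univ.erase i, c j := calc
    ∑ j, c j = μ (⋃ j, A j) := by rw [hc, hA, measure_univ]
    _ ≤ ∑ j, μ (A j) := measure_iUnion_fintype_le μ A
    _ = μ (A i) + ∑ j ∈ univ.erase i, μ (A j) := (add_sum_erase _ _ (mem_univ i)).symm
    _ ≤ μ (A i) + ∑ j ∈ univ.erase i, c j := by gcongr with j; exact hle j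
  rw [← add_sum_erase _ _ (mem_univ i)] at hcover
  exact (ENNReal.add_le_add_iff_right hrest).1 hcover

theorem Int.exists_fin_three_add_emod_eq_zero_iff (n : ℤ) :
    ∃ k₀ : Fin 3, ∀ k : Fin 3, (n + k) % 3 = 0 ↔ k = k₀ := by
  have : n % 3 = 0 ∨ n % 3 = 1 ∨ n % 3 = 2 := by omega
  rcases this with h | h | h
  · exact ⟨0, fun k => by fin_cases k <;> simp <;> omega⟩
  · exact ⟨2, fun k => by fin_cases k <;> simp <;> omega⟩
  · exact ⟨1, fun k => by fin_cases k <;> simp <;> omega⟩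

theorem ENNReal.ofReal_two_mul_div_three (x : ℝ) :
    ENNReal.ofReal (2 * x / 3) = 2 * (3⁻¹ * ENNReal.ofReal x) := by
  rw [ENNReal.ofReal_div_of_pos (by norm_num), ENNReal.ofReal_mul (by norm_num)]
  simp [div_eq_mul_inv]
  ring

def HasPhaseFlipLaw {Ω : Type*} [MeasurableSpace Ω] (μ : Measure Ω) (ε : ℝ)
    (phase : Ω → Fin 3) (flip : ℤ → Ω → Bool) : Prop :=
  ∀ (k : Fin 3) (s : Finset ℤ) (b : ℤ → Bool),
    μ {ω | phase ω = k ∧ ∀ i ∈ s, flip i ω = b i} =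
      3⁻¹ * ∏ i ∈ s, (if b i then ENNReal.ofReal ε else ENNReal.ofReal (1 - ε))

namespace HasPhaseFlipLaw

variable {Ω : Type*} [MeasurableSpace Ω] {μ : Measure Ω} {ε : ℝ} {phase : Ω → Fin 3}
  {flip : ℤ → Ω → Bool}

theorem measure_phase_eq (h : HasPhaseFlipLaw μ ε phase flip) (k : Fin 3) :
    μ {ω | phase ω = k} = 3⁻¹ := by
  simpa using h k ∅ fun _ => true

theorem measure_phase_flip_eq (h : HasPhaseFlipLaw μ ε phase flip) (k : Fin 3) (n : ℤ)
    (b : Bool) :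
    μ {ω | phase ω = k ∧ flip n ω = b} =
      3⁻¹ * if b then ENNReal.ofReal ε else ENNReal.ofReal (1 - ε) := by
  simpa using h k {n} fun _ => b

theorem measure_phase_ne_flip_le (h : HasPhaseFlipLaw μ ε phase flip) (k₀ : Fin 3) (n : ℤ)
    (b : Bool) :
    μ {ω | phase ω ≠ k₀ ∧ flip n ω = b} ≤
      2 * (3⁻¹ * if b then ENNReal.ofReal ε else ENNReal.ofReal (1 - ε)) := calc
  μ {ω | phase ω ≠ k₀ ∧ flip n ω = b}
      ≤ μ (⋃ k ∈ univ.erase k₀, {ω | phase ω = k ∧ flip n ω = b}) :=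
    measure_mono fun ω hω => by simpa using hω
  _ ≤ ∑ k ∈ univ.erase k₀, μ {ω | phase ω = k ∧ flip n ω = b} := measure_biUnion_finset_le _ _
  _ = _ := by simp [h.measure_phase_flip_eq, card_erase_of_mem]

end HasPhaseFlipLaw

/-- For ε ∈ (0,1), the stationary chain generated by (τ₁, p₁) — equivalently, the random
perturbation of the periodic pattern (2,1,1) with uniformly random phase in which each 1 is
independently flipped to 0 with probability ε — has symbol marginal
P(X_n = 2) = 1/3, P(X_n = 1) = 2(1−ε)/3, P(X_n = 0) = 2ε/3. -/
theorem stmt17 {Ω : Type*} [MeasurableSpace Ω] (μ : Measure Ω) [IsProbabilityMeasure μ]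
    (ε : ℝ) (hε : ε ∈ Set.Ioo (0 : ℝ) 1)
    (phase : Ω → Fin 3) (flip : ℤ → Ω → Bool)
    (hjoint : ∀ (k : Fin 3) (s : Finset ℤ) (b : ℤ → Bool),
      μ {ω | phase ω = k ∧ ∀ i ∈ s, flip i ω = b i} =
        (3 : ℝ≥0∞)⁻¹ *
          ∏ i ∈ s, (if b i then ENNReal.ofReal ε else ENNReal.ofReal (1 - ε)))
    (X : ℤ → Ω → Fin 3)
    (hX : ∀ (n : ℤ) (ω : Ω),
      X n ω = if (n + (phase ω : ℤ)) % 3 = 0 then 2 else if flip n ω then 0 else 1) :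
    ∀ n : ℤ,
      μ {ω | X n ω = 2} = ENNReal.ofReal (1 / 3) ∧
      μ {ω | X n ω = 1} = ENNReal.ofReal (2 * (1 - ε) / 3) ∧
      μ {ω | X n ω = 0} = ENNReal.ofReal (2 * ε / 3) := by
  intro n
  have hlaw : HasPhaseFlipLaw μ ε phase flip := hjoint
  obtain ⟨k₀, hk₀⟩ := Int.exists_fin_three_add_emod_eq_zero_iff n
  have hXn : ∀ ω, X n ω = if phase ω = k₀ then 2 else if flip n ω then 0 else 1 := by
    simp only [hX, hk₀, implies_true]
  have hflip : ∀ b : Bool,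
      {ω | X n ω = if b then 0 else 1} ⊆ {ω | phase ω ≠ k₀ ∧ flip n ω = b} := by
    intro b ω hω
    rw [Set.mem_ofPred_eq, hXn] at hω
    split_ifs at hω <;> simp_all
  have hphase : {ω | X n ω = 2} ⊆ {ω | phase ω = k₀} := by
    intro ω hω
    rw [Set.mem_ofPred_eq, hXn] at hω
    split_ifs at hω <;> simp_all
  let c : Fin 3 → ℝ≥0∞ :=
    ![ENNReal.ofReal (2 * ε / 3), ENNReal.ofReal (2 * (1 - ε) / 3), ENNReal.ofReal (1 / 3)]
  have hle : ∀ k, μ {ω | X n ω = k} ≤ c k := by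
    intro k
    fin_cases k
    · simpa [c, ENNReal.ofReal_two_mul_div_three] using
        (measure_mono (hflip true)).trans (hlaw.measure_phase_ne_flip_le k₀ n true)
    · simpa [c, ENNReal.ofReal_two_mul_div_three] using
        (measure_mono (hflip false)).trans (hlaw.measure_phase_ne_flip_le k₀ n false)
    · simpa [c, one_div, ENNReal.ofReal_inv_of_pos] using
        (measure_mono hphase).trans (hlaw.measure_phase_eq k₀).le
  have hc : ∑ k, c k = 1 := by
    obtain ⟨hε₀, hε₁⟩ := hε
    simp only [Fin.sum_univ_three, c, Matrix.cons_val_zero, Matrix.cons_val_one,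
      Matrix.cons_val_two, Matrix.tail_cons, Matrix.head_cons]
    rw [← ENNReal.ofReal_add (by positivity) (by linarith),
      ← ENNReal.ofReal_add (by linarith) (by norm_num), ← ENNReal.ofReal_one]
    ring_nf
  have hmarg := measure_eq_of_iUnion_eq_univ_of_le
    (Set.iUnion_eq_univ_iff.2 fun ω => ⟨X n ω, rfl⟩) hle hc
  exact ⟨hmarg 2, hmarg 1, hmarg 0⟩
end
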